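/- arXiv:1606.03315 — 2 statements merged into one kernel-verified Lean document; each statement's English description precedes it below -/
import Mathlib

section
/- Every rotation of three-dimensional space arises from quaternion conjugation: for every ℝ-linear map R on the space of purely imaginary quaternions (identified with ℝ³) that preserves the Euclidean norm and has determinant 1, there exists a unit quaternion q such that R(v) = q v q⁻¹ for every purely imaginary quaternion v. -/
open Quaternion

/-- The quaternion with real (scalar) part `α` and imaginary (vector) part
`u ∈ ℝ³` (the purely imaginary quaternions being identified with Euclidean `ℝ³`). -/
def quatOf (α : ℝ) (u : EuclideanSpace ℝ (Fin 3)) : ℍ[ℝ] := ⟨α, u 0, u 1, u 2⟩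

/-!
By the Cartan–Dieudonné theorem every linear isometry of `ℝ³` is a product of reflections in
planes `uᗮ`. On pure quaternions, `u v + v u = -2 ⟪u, v⟫`, so the reflection in `uᗮ` is
`v ↦ -u v u⁻¹`. Hence every isometry `φ` satisfies `φ v = det φ • q v q⁻¹` with `q` the product
of the normal vectors; for a rotation the sign is `+1`, and `q` may be normalized.
-/

local notation "ℝ³" => EuclideanSpace ℝ (Fin 3)

section
variable (α : ℝ) (u : ℝ³)

@[simp] lemma re_quatOf : (quatOf α u).re = α := rfl
@[simp] lemma imI_quatOf : (quatOf α u).imI = u 0 := rfl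
@[simp] lemma imJ_quatOf : (quatOf α u).imJ = u 1 := rfl
@[simp] lemma imK_quatOf : (quatOf α u).imK = u 2 := rfl

end

def pureQuat : ℝ³ →ₗ[ℝ] ℍ[ℝ] where
  toFun := quatOf 0
  map_add' u v := by ext <;> simp
  map_smul' c u := by ext <;> simp

@[simp] lemma pureQuat_apply (u : ℝ³) : pureQuat u = quatOf 0 u := rfl

lemma pureQuat_injective : Function.Injective pureQuat := by
  intro u v h
  ext i
  fin_cases i
  exacts [congr_arg QuaternionAlgebra.imI h, congr_arg QuaternionAlgebra.imJ h,
    congr_arg QuaternionAlgebra.imK h]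

lemma pureQuat_mul_add_mul (u v : ℝ³) :
    pureQuat u * pureQuat v + pureQuat v * pureQuat u = ((-2 * inner ℝ u v : ℝ) : ℍ[ℝ]) := by
  ext <;> simp [PiLp.inner_apply, Fin.sum_univ_three] <;> ring

lemma pureQuat_mul_self (u : ℝ³) : pureQuat u * pureQuat u = ((-‖u‖ ^ 2 : ℝ) : ℍ[ℝ]) := by
  rw [EuclideanSpace.real_norm_sq_eq, Fin.sum_univ_three]
  ext <;> simp only [pureQuat_apply, re_mul, imI_mul, imJ_mul, imK_mul, re_quatOf, imI_quatOf,
    imJ_quatOf, imK_quatOf, re_coe, imI_coe, imJ_coe, imK_coe] <;> ring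

lemma pureQuat_mul_eq_neg_reflection_mul {u : ℝ³} (hu : u ≠ 0) (v : ℝ³) :
    pureQuat u * pureQuat v = -(pureQuat ((ℝ ∙ u)ᗮ.reflection v) * pureQuat u) := by
  rw [Submodule.reflection_orthogonal_apply, Submodule.reflection_singleton_apply,
    RCLike.ofReal_real_eq_id, id]
  simp only [map_neg, map_sub, map_nsmul, map_smul, neg_mul, neg_neg, sub_mul, smul_mul_assoc,
    pureQuat_mul_self]
  rw [eq_sub_of_add_eq (pureQuat_mul_add_mul u v), smul_coe, ← Quaternion.coe_smul]
  congr 2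
  have hu' : ‖u‖ ≠ 0 := norm_ne_zero_iff.mpr hu
  rw [nsmul_eq_mul]
  field_simp
  ring

/-- `φ v = det φ • q v q⁻¹` on pure quaternions, stated without inverting `q`. -/
def IsSignedQuatConj (q : ℍ[ℝ]) (φ : ℝ³ ≃ₗᵢ[ℝ] ℝ³) : Prop :=
  ∀ v, q * pureQuat v = LinearMap.det (φ.toLinearEquiv : ℝ³ →ₗ[ℝ] ℝ³) • pureQuat (φ v) * q

lemma isSignedQuatConj_one : IsSignedQuatConj 1 1 := by
  intro v
  rw [show ((1 : ℝ³ ≃ₗᵢ[ℝ] ℝ³).toLinearEquiv : ℝ³ →ₗ[ℝ] ℝ³) = LinearMap.id from rfl,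
    LinearMap.det_id, one_smul, one_mul, mul_one]
  rfl

lemma IsSignedQuatConj.mul {p q : ℍ[ℝ]} {φ ψ : ℝ³ ≃ₗᵢ[ℝ] ℝ³} (hp : IsSignedQuatConj p φ)
    (hq : IsSignedQuatConj q ψ) : IsSignedQuatConj (p * q) (φ * ψ) := by
  intro v
  have hdet : LinearMap.det ((φ * ψ).toLinearEquiv : ℝ³ →ₗ[ℝ] ℝ³) =
      LinearMap.det (φ.toLinearEquiv : ℝ³ →ₗ[ℝ] ℝ³) *
        LinearMap.det (ψ.toLinearEquiv : ℝ³ →ₗ[ℝ] ℝ³) :=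
    LinearMap.det_comp _ _
  rw [mul_assoc, hq, smul_mul_assoc, mul_smul_comm, ← mul_assoc, hp, hdet]
  simp only [smul_mul_assoc, mul_assoc, mul_smul]
  exact smul_comm _ _ _

lemma IsSignedQuatConj.smul {q : ℍ[ℝ]} {φ : ℝ³ ≃ₗᵢ[ℝ] ℝ³} (hq : IsSignedQuatConj q φ) (c : ℝ) :
    IsSignedQuatConj (c • q) φ := by
  intro v
  rw [smul_mul_assoc, hq, mul_smul_comm]

lemma IsSignedQuatConj.mul_mul_inv {q : ℍ[ℝ]} {φ : ℝ³ ≃ₗᵢ[ℝ] ℝ³} (hq : IsSignedQuatConj q φ)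
    (hq0 : q ≠ 0) (hφ : LinearMap.det (φ.toLinearEquiv : ℝ³ →ₗ[ℝ] ℝ³) = 1) (v : ℝ³) :
    q * pureQuat v * q⁻¹ = pureQuat (φ v) := by
  rw [hq, hφ, one_smul, mul_inv_cancel_right₀ hq0]

lemma isSignedQuatConj_reflection {u : ℝ³} (hu : u ≠ 0) :
    IsSignedQuatConj (pureQuat u) (ℝ ∙ u)ᗮ.reflection := by
  intro v
  have hdet : LinearMap.det ((ℝ ∙ u)ᗮ.reflection.toLinearEquiv : ℝ³ →ₗ[ℝ] ℝ³) = -1 := by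
    rw [Submodule.det_reflection, Submodule.orthogonal_orthogonal, finrank_span_singleton hu,
      pow_one]
  rw [hdet, neg_one_smul, neg_mul, pureQuat_mul_eq_neg_reflection_mul hu]

lemma exists_isSignedQuatConj (φ : ℝ³ ≃ₗᵢ[ℝ] ℝ³) : ∃ q ≠ 0, IsSignedQuatConj q φ := by
  obtain ⟨l, -, rfl⟩ := φ.reflections_generate_dim
  induction l with
  | nil => exact ⟨1, one_ne_zero, isSignedQuatConj_one⟩
  | cons u l ih =>
    obtain ⟨q, hq0, hq⟩ := ih
    rw [List.map_cons, List.prod_cons]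
    by_cases hu : u = 0
    · have hrefl : (ℝ ∙ u)ᗮ.reflection = 1 := by
        ext v : 1
        exact Submodule.reflection_mem_subspace_eq_self (by simp [hu])
      exact ⟨q, hq0, by rwa [hrefl, one_mul]⟩
    · exact ⟨pureQuat u * q, mul_ne_zero ((map_ne_zero_iff _ pureQuat_injective).2 hu) hq0,
        (isSignedQuatConj_reflection hu).mul hq⟩

/-- Every rotation of `ℝ³` (an `ℝ`-linear map preserving the Euclidean norm and
of determinant `1`) on the purely imaginary quaternions arises as conjugation by
some unit quaternion. -/
theorem rotation_eq_quaternion_conjugation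
    (R : EuclideanSpace ℝ (Fin 3) →ₗ[ℝ] EuclideanSpace ℝ (Fin 3))
    (hnorm : ∀ v, ‖R v‖ = ‖v‖) (hdet : LinearMap.det R = 1) :
    ∃ q : ℍ[ℝ], ‖q‖ = 1 ∧
      ∀ v : EuclideanSpace ℝ (Fin 3), q * quatOf 0 v * q⁻¹ = quatOf 0 (R v) := by
  let φ : ℝ³ ≃ₗᵢ[ℝ] ℝ³ := LinearIsometry.toLinearIsometryEquiv ⟨R, hnorm⟩ rfl
  obtain ⟨q, hq0, hq⟩ := exists_isSignedQuatConj φ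
  have hnq : ‖q‖ ≠ 0 := norm_ne_zero_iff.mpr hq0
  refine ⟨‖q‖⁻¹ • q, by rw [norm_smul, norm_inv, norm_norm, inv_mul_cancel₀ hnq], fun v => ?_⟩
  exact (hq.smul _).mul_mul_inv (smul_ne_zero (inv_ne_zero hnq) hq0) hdet v
end

section
/- There is no three-dimensional real associative division algebra: if D is a (possibly noncommutative) division ring that is also an algebra over ℝ and is finite-dimensional as a real vector space, then its dimension over ℝ is not equal to 3. -/
/-!
An algebra over a field that is a domain of prime dimension has only the trivial subalgebras, so it is
generated by any element outside the base field and is therefore commutative. A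
three-dimensional real division algebra would thus be a field extension of `ℝ` of degree `3`,
but every finite extension of `ℝ` embeds into the algebraically closed `ℂ`, so has degree at
most `2`.
-/

open Module

theorem mul_comm_of_finrank_prime {F D : Type*} [Field F] [Ring D] [IsDomain D] [Algebra F D]
    (hp : (finrank F D).Prime) (a b : D) : a * b = b * a := by
  have := Subalgebra.isSimpleOrder_of_finrank_prime F D hp
  obtain hbot | htop := eq_bot_or_eq_top (Algebra.adjoin F {a})
  · obtain ⟨r, rfl⟩ := Algebra.mem_bot.1 (hbot ▸ Algebra.self_mem_adjoin_singleton F a)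
    exact Algebra.commutes r b
  · exact (Algebra.commute_of_mem_adjoin_singleton_of_commute
      (htop ▸ Algebra.mem_top : b ∈ Algebra.adjoin F {a}) (Commute.refl a)).eq

theorem finrank_real_le_two (E : Type*) [Field E] [Algebra ℝ E] [FiniteDimensional ℝ E] :
    finrank ℝ E ≤ 2 := by
  obtain ⟨⟨e⟩⟩ | ⟨⟨e⟩⟩ := IsAlgClosed.nonempty_algEquiv_or_of_finrank_eq_two (F' := ℂ) E
    Complex.finrank_real_complex
  · simp [e.toLinearEquiv.finrank_eq]
  · simp [e.toLinearEquiv.finrank_eq, Complex.finrank_real_complex]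

/-- There is no three-dimensional real associative division algebra. -/
theorem no_three_dimensional_real_division_algebra
    (D : Type*) [DivisionRing D] [Algebra ℝ D] [FiniteDimensional ℝ D] :
    Module.finrank ℝ D ≠ 3 := by
  intro h3
  let : Field D :=
    { ‹DivisionRing D› with mul_comm := mul_comm_of_finrank_prime (h3 ▸ Nat.prime_three) }
  have := finrank_real_le_two D
  omega
end
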